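/- arXiv:1912.07114 — 2 statements merged into one kernel-verified Lean document; each statement's English description precedes it below -/
import Mathlib

section
/- Let G = Z_p^2 × Z_q with p, q distinct primes, and suppose A ⊕ B = G with |A| = p. Then there exists a nonzero a ∈ Z_p^2 such that the character χ_{(a,0)} of order p satisfies χ_{(a,0)}(A) = 0; consequently the cyclic subgroup generated by (a,0) is a spectrum for A. -/
open Complex Finset

noncomputable def chiZp2 (p : ℕ) (a u : ZMod p × ZMod p) : ℂ :=
  Complex.exp (2 * Real.pi * Complex.I * (((u.1 * a.1 + u.2 * a.2 : ZMod p).val : ℂ) / p))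

noncomputable def chiG (p q : ℕ) (l x : (ZMod p × ZMod p) × ZMod q) : ℂ :=
  chiZp2 p l.1 x.1 *
    Complex.exp (2 * Real.pi * Complex.I * (((x.2 * l.2 : ZMod q).val : ℂ) / q))

def IsSpectrum (p q : ℕ) [NeZero p] [NeZero q]
    (S Λ : Finset ((ZMod p × ZMod p) × ZMod q)) : Prop :=
  Λ.card = S.card ∧ ∀ l ∈ Λ, ∀ l' ∈ Λ, l ≠ l' →
    ∑ x ∈ S, chiG p q l x * (starRingEnd ℂ) (chiG p q l' x) = 0

def IsSpectral (p q : ℕ) [NeZero p] [NeZero q]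
    (S : Finset ((ZMod p × ZMod p) × ZMod q)) : Prop :=
  ∃ Λ, IsSpectrum p q S Λ

def Tiles (p q : ℕ) [NeZero p] [NeZero q]
    (S : Finset ((ZMod p × ZMod p) × ZMod q)) : Prop :=
  ∃ T : Finset ((ZMod p × ZMod p) × ZMod q),
    S.card * T.card = Fintype.card ((ZMod p × ZMod p) × ZMod q) ∧
    ∀ g, ∃ s ∈ S, ∃ t ∈ T, s + t = g

/-!
For a tiling `A ⊕ B = G` and a nontrivial character `χ` of `G`, `χ(A) χ(B) = ∑_G χ = 0`.
If `χ_(a,0)(A) ≠ 0` for all `a ≠ 0`, then all `χ_(a,0)(B)` vanish, and Fourier inversion on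
`(ZMod p)²` gives `|B| = p² · #{y ∈ B | y.1 = 0}`, impossible since `|B| = pq`. So
`∑_{x ∈ A} ζ^⟨a, x.1⟩ = 0` for some `a ≠ 0`, where `ζ = e^{2πi/p}`. As `ζ^d` (`p ∤ d`) has the
same minimal polynomial as `ζ`, also `∑_{x ∈ A} ζ^{d⟨a, x.1⟩} = 0`; these are the inner products
on `A` of the `p = |A|` distinct characters `χ_(ca,0)`.
-/

open Polynomial in
theorem IsPrimitiveRoot.sum_pow_pow_eq_zero_of_coprime {K ι : Type*} [Field K] [CharZero K]
    {ζ : K} {n : ℕ} (hζ : IsPrimitiveRoot ζ n) (hn : 0 < n) {k : ℕ} (hk : k.Coprime n)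
    (s : Finset ι) (e : ι → ℕ) (h : ∑ i ∈ s, ζ ^ e i = 0) :
    ∑ i ∈ s, (ζ ^ k) ^ e i = 0 := by
  have heval (x : K) : aeval x (∑ i ∈ s, X ^ e i : ℤ[X]) = ∑ i ∈ s, x ^ e i := by simp
  obtain ⟨r, hr⟩ := minpoly.isIntegrallyClosed_dvd (hζ.isIntegral hn) ((heval ζ).trans h)
  rw [← heval, hr, hζ.minpoly_eq_pow_coprime hk, map_mul, minpoly.aeval, zero_mul]

namespace ZMod

variable {n : ℕ} [NeZero n]

theorem isPrimitiveRoot_stdAddChar_one : IsPrimitiveRoot (stdAddChar (1 : ZMod n)) n := by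
  have h := stdAddChar_coe (N := n) 1
  push_cast at h
  rw [h, mul_one]
  exact Complex.isPrimitiveRoot_exp n (NeZero.ne n)

theorem stdAddChar_eq_pow_val (t : ZMod n) : stdAddChar t = stdAddChar (1 : ZMod n) ^ t.val := by
  rw [← AddChar.map_nsmul_eq_pow, nsmul_one, natCast_zmod_val]

theorem sum_stdAddChar_mul_eq_zero_of_isUnit {ι : Type*} {s : Finset ι} {t : ι → ZMod n}
    (h : ∑ i ∈ s, stdAddChar (t i) = 0) {d : ZMod n} (hd : IsUnit d) :
    ∑ i ∈ s, stdAddChar (d * t i) = 0 := by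
  have hmul (i : ι) : stdAddChar (d * t i) = (stdAddChar (1 : ZMod n) ^ d.val) ^ (t i).val := by
    rw [← pow_mul, ← AddChar.map_nsmul_eq_pow, nsmul_one, Nat.cast_mul, natCast_zmod_val,
      natCast_zmod_val]
  simp only [hmul]
  simp only [stdAddChar_eq_pow_val (t _)] at h
  exact isPrimitiveRoot_stdAddChar_one.sum_pow_pow_eq_zero_of_coprime (NeZero.pos n)
    (val_coe_unit_coprime hd.unit) s _ h

theorem conj_stdAddChar (t : ZMod n) : starRingEnd ℂ (stdAddChar t) = stdAddChar (-t) := by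
  rw [AddChar.starComp_apply (by rw [ringChar_zmod_n]; exact NeZero.pos n), AddChar.inv_apply]

noncomputable def dotChar (n : ℕ) [NeZero n] (a : ZMod n × ZMod n) :
    AddChar (ZMod n × ZMod n) ℂ where
  toFun u := stdAddChar (a.1 * u.1 + a.2 * u.2)
  map_zero_eq_one' := by simp
  map_add_eq_mul' u v := by
    rw [← AddChar.map_add_eq_mul]
    congr 1
    simp only [Prod.fst_add, Prod.snd_add]
    ring

theorem dotChar_apply (a u : ZMod n × ZMod n) :
    dotChar n a u = stdAddChar (a.1 * u.1 + a.2 * u.2) := rfl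

theorem dotChar_comm (a u : ZMod n × ZMod n) : dotChar n a u = dotChar n u a := by
  simp only [dotChar_apply, mul_comm]

theorem sum_dotChar_apply (u : ZMod n × ZMod n) :
    ∑ a, dotChar n a u = if u = 0 then (n : ℂ) ^ 2 else 0 := by
  have hprim := isPrimitive_stdAddChar n
  simp only [dotChar_apply, AddChar.map_add_eq_mul, Fintype.sum_prod_type, ← Finset.mul_sum,
    ← Finset.sum_mul, AddChar.sum_mulShift _ hprim, card, Prod.ext_iff, Prod.fst_zero,
    Prod.snd_zero]
  split_ifs <;> simp_all [sq]

theorem dotChar_ne_zero {a : ZMod n × ZMod n} (ha : a ≠ 0) : dotChar n a ≠ 0 := by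
  rw [← AddChar.sum_eq_zero_iff_ne_zero]
  simp only [dotChar_comm a, sum_dotChar_apply, if_neg ha]

theorem card_eq_sq_mul_card_filter_of_sum_dotChar_eq_zero {ι : Type*}
    (B : Finset ι) (π : ι → ZMod n × ZMod n)
    (h : ∀ a ≠ 0, ∑ y ∈ B, dotChar n a (π y) = 0) :
    #B = n ^ 2 * #{y ∈ B | π y = 0} := by
  have hfourier : ∑ a, ∑ y ∈ B, dotChar n a (π y) = n ^ 2 * #{y ∈ B | π y = 0} := by
    rw [Finset.sum_comm]
    simp [sum_dotChar_apply, Finset.sum_ite, mul_comm]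
  rw [Fintype.sum_eq_single 0 h] at hfourier
  have hcard : (#B : ℂ) = n ^ 2 * #{y ∈ B | π y = 0} := by simpa [dotChar_apply] using hfourier
  exact_mod_cast hcard

end ZMod

section Tiling

variable {G : Type*} [Fintype G] {A B : Finset G}

theorem Finset.card_mul_card_eq_of_bijective_add [Add G]
    (htile : Function.Bijective fun ab : A × B => (ab.1 : G) + ab.2) :
    #A * #B = Fintype.card G := by
  simpa using Fintype.card_of_bijective htile

theorem AddChar.sum_mul_sum_eq_zero_of_bijective_add [AddGroup G] {R : Type*} [CommSemiring R]
    [IsDomain R]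
    (htile : Function.Bijective fun ab : A × B => (ab.1 : G) + ab.2)
    {ψ : AddChar G R} (hψ : ψ ≠ 0) : (∑ x ∈ A, ψ x) * ∑ y ∈ B, ψ y = 0 := by
  classical
  calc (∑ x ∈ A, ψ x) * ∑ y ∈ B, ψ y
      = ∑ ab : A × B, ψ ((ab.1 : G) + ab.2) := by
        rw [Finset.sum_mul_sum, Fintype.sum_prod_type, ← Finset.sum_coe_sort A]
        simp_rw [← Finset.sum_coe_sort B, AddChar.map_add_eq_mul]
    _ = ∑ g, ψ g := Fintype.sum_bijective _ htile _ _ fun _ => rfl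
    _ = 0 := (AddChar.sum_eq_ite ψ).trans (if_neg hψ)

end Tiling

theorem chiG_mk_zero {p : ℕ} [NeZero p] (q : ℕ) (a : ZMod p × ZMod p)
    (x : (ZMod p × ZMod p) × ZMod q) : chiG p q (a, 0) x = ZMod.dotChar p a x.1 := by
  rw [ZMod.dotChar_apply, ZMod.stdAddChar_apply, ZMod.toCircle_apply, chiG, chiZp2]
  simp only [mul_zero, ZMod.val_zero, CharP.cast_eq_zero, zero_div, Complex.exp_zero, mul_one,
    mul_div_assoc, mul_comm a.1, mul_comm a.2]

section

variable {p q : ℕ} [Fact p.Prime]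

theorem exists_sum_dotChar_eq_zero_of_bijective_add [Fact q.Prime] (hpq : p ≠ q)
    {A B : Finset ((ZMod p × ZMod p) × ZMod q)}
    (htile : Function.Bijective fun ab : A × B => (ab.1 : (ZMod p × ZMod p) × ZMod q) + ab.2)
    (hA : #A = p) : ∃ a ≠ 0, ∑ x ∈ A, ZMod.dotChar p a x.1 = 0 := by
  by_contra! hA0
  have hp := (Fact.out : p.Prime).pos
  have hB : #B = p * q := by
    have h := Finset.card_mul_card_eq_of_bijective_add htile
    simp only [hA, Fintype.card_prod, ZMod.card] at h
    exact Nat.eq_of_mul_eq_mul_left hp (by rw [h]; ring)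
  have hB0 (a : ZMod p × ZMod p) (ha : a ≠ 0) : ∑ y ∈ B, ZMod.dotChar p a y.1 = 0 := by
    obtain ⟨u, hu⟩ := AddChar.ne_zero_iff.1 (ZMod.dotChar_ne_zero ha)
    have hψ : (ZMod.dotChar p a).compAddMonoidHom (AddMonoidHom.fst _ (ZMod q)) ≠ 0 :=
      AddChar.ne_zero_iff.2 ⟨(u, 0), hu⟩
    exact (mul_eq_zero.1 (AddChar.sum_mul_sum_eq_zero_of_bijective_add htile hψ)).resolve_left
      (hA0 a ha)
  have hcount := ZMod.card_eq_sq_mul_card_filter_of_sum_dotChar_eq_zero B Prod.fst hB0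
  have hq : q = p * #{y ∈ B | y.1 = 0} :=
    Nat.eq_of_mul_eq_mul_left hp (by rw [← hB, hcount]; ring)
  exact hpq ((Nat.prime_dvd_prime_iff_eq Fact.out Fact.out).1 (Dvd.intro _ hq.symm))

theorem isSpectrum_image_smul [NeZero q] {A : Finset ((ZMod p × ZMod p) × ZMod q)}
    (hA : #A = p) {a : ZMod p × ZMod p} (ha : a ≠ 0)
    (hAa : ∑ x ∈ A, ZMod.dotChar p a x.1 = 0) :
    IsSpectrum p q A
      (univ.image fun c : ZMod p => ((c • a, (0 : ZMod q)) : (ZMod p × ZMod p) × ZMod q)) := by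
  constructor
  · have hinj : Function.Injective
        fun c : ZMod p => ((c • a, (0 : ZMod q)) : (ZMod p × ZMod p) × ZMod q) :=
      (Prod.mk_left_injective 0).comp (smul_left_injective _ ha)
    rw [card_image_of_injective _ hinj, card_univ, ZMod.card, hA]
  · rintro _ hl _ hl' hne
    obtain ⟨c, -, rfl⟩ := mem_image.1 hl
    obtain ⟨c', -, rfl⟩ := mem_image.1 hl'
    have hcc : c - c' ≠ 0 := sub_ne_zero.2 fun h => hne (by rw [h])
    simp only [chiG_mk_zero, ZMod.dotChar_apply, ZMod.conj_stdAddChar,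
      ← AddChar.map_add_eq_mul]
    convert ZMod.sum_stdAddChar_mul_eq_zero_of_isUnit hAa hcc.isUnit using 3
    simp only [Prod.smul_fst, Prod.smul_snd, smul_eq_mul]
    ring

end

theorem case_p_tile_spectrum (p q : ℕ) [Fact p.Prime] [Fact q.Prime] (hpq : p ≠ q)
    (A B : Finset ((ZMod p × ZMod p) × ZMod q))
    (htile : ∀ g : (ZMod p × ZMod p) × ZMod q,
      ∃! ab : A × B, ((ab.1 : (ZMod p × ZMod p) × ZMod q) + (ab.2 : (ZMod p × ZMod p) × ZMod q)) = g)
    (hA : A.card = p) :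
    ∃ a : ZMod p × ZMod p, a ≠ 0 ∧
      (∑ x ∈ A, chiG p q (a, (0 : ZMod q)) x) = 0 ∧
      IsSpectrum p q A
        (Finset.univ.image fun c : ZMod p => ((c • a, (0 : ZMod q)) : (ZMod p × ZMod p) × ZMod q)) := by
  obtain ⟨a, ha, hAa⟩ := exists_sum_dotChar_eq_zero_of_bijective_add hpq
    ((Function.bijective_iff_existsUnique _).2 htile) hA
  exact ⟨a, ha, by simpa only [chiG_mk_zero] using hAa, isSpectrum_image_smul hA ha hAa⟩
end

section
/- Let G = Z_p^2 × Z_q with p, q distinct primes and let (S, Λ) be a spectral pair in G with |S| divisible by p^2 (and gcd(|G|,|S|) = p^2, so q ∤ |S|). If no two distinct elements of S differ only in their Z_q-coordinate, then S is a tile of G; moreover, if two elements of S do differ only in the Z_q-coordinate, then some character of order q vanishes on Λ, forcing q | |Λ|, a contradiction. -/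
open Complex Finset

/-!
If two distinct points `s, s'` of `S` differ only in the `ZMod q`-coordinate, column
orthogonality of the (square, hence invertible) character matrix of the spectral pair gives
`∑ λ ∈ Λ, ψ (c * λ.2) = 0`, where `ψ` is the standard character of `ZMod q` and
`c = s'.2 - s.2 ≠ 0`. With `ψ j = ζ ^ j.val` for a primitive `q`-th root of unity `ζ`, the
cyclotomic polynomial `Φ_q` divides `∑ λ ∈ Λ, X ^ (c * λ.2).val` in `ℤ[X]`; evaluating at `1`
gives `q ∣ #Λ = #S`, which `gcd (p ^ 2 * q) #S = p ^ 2` forbids. Hence `Prod.fst` is injective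
on `S`, and since `p ^ 2 ∣ #S` it is a bijection onto `ZMod p × ZMod p`, so `S` tiles with
`{0} × ZMod q`.
-/

open Polynomial in
theorem IsPrimitiveRoot.prime_dvd_card_of_sum_pow_eq_zero {K ι : Type*} [Field K] [CharZero K]
    {q : ℕ} (hq : q.Prime) {ζ : K} (hζ : IsPrimitiveRoot ζ q) (s : Finset ι) (e : ι → ℕ)
    (h : ∑ x ∈ s, ζ ^ e x = 0) : q ∣ #s := by
  have : Fact q.Prime := ⟨hq⟩
  let P : ℤ[X] := ∑ x ∈ s, X ^ e x
  have hP : aeval ζ P = 0 := by simpa [P] using h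
  obtain ⟨r, hr⟩ : cyclotomic q ℤ ∣ P := by
    rw [cyclotomic_eq_minpoly hζ hq.pos]
    exact minpoly.isIntegrallyClosed_dvd (hζ.isIntegral hq.pos) hP
  have h1 := congrArg (eval 1) hr
  simp only [P, eval_finsetSum, eval_pow, eval_X, one_pow, sum_const, nsmul_eq_mul, mul_one,
    eval_mul, eval_one_cyclotomic_prime] at h1
  exact_mod_cast Dvd.intro _ h1.symm

theorem AddChar.isPrimitiveRoot_map_one {M : Type*} [CommMonoid M] {n : ℕ}
    {ψ : AddChar (ZMod n) M} (hψ : Function.Injective ψ) : IsPrimitiveRoot (ψ 1) n where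
  pow_eq_one := by rw [← ψ.map_nsmul_eq_pow, nsmul_one, ZMod.natCast_self, ψ.map_zero_eq_one]
  dvd_of_pow_eq_one k hk := by
    rw [← ψ.map_nsmul_eq_pow, nsmul_one, ← ψ.map_zero_eq_one, hψ.eq_iff] at hk
    exact (ZMod.natCast_eq_zero_iff k n).1 hk

theorem AddChar.prime_dvd_card_of_sum_eq_zero {K ι : Type*} [Field K] [CharZero K]
    {q : ℕ} (hq : q.Prime) {ψ : AddChar (ZMod q) K} (hψ : Function.Injective ψ)
    (s : Finset ι) (f : ι → ZMod q) (h : ∑ x ∈ s, ψ (f x) = 0) : q ∣ #s := by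
  have : NeZero q := ⟨hq.ne_zero⟩
  refine (isPrimitiveRoot_map_one hψ).prime_dvd_card_of_sum_pow_eq_zero hq s
    (fun x ↦ (f x).val) ?_
  simpa only [← ψ.map_nsmul_eq_pow, nsmul_one, ZMod.natCast_val, ZMod.cast_id', id] using h

theorem sum_starRingEnd_mul_eq_zero_of_sum_mul_starRingEnd_eq_zero {K α β : Type*}
    [Field K] [CharZero K] [StarRing K]
    {S : Finset α} {Λ : Finset β} (χ : β → α → K) (hcard : #Λ = #S)
    (hunit : ∀ l ∈ Λ, ∀ x ∈ S, χ l x * starRingEnd K (χ l x) = 1)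
    (horth : ∀ l ∈ Λ, ∀ l' ∈ Λ, l ≠ l' → ∑ x ∈ S, χ l x * starRingEnd K (χ l' x) = 0)
    {s s' : α} (hs : s ∈ S) (hs' : s' ∈ S) (hne : s ≠ s') :
    ∑ l ∈ Λ, starRingEnd K (χ l s) * χ l s' = 0 := by
  classical
  have hS : (#S : K) ≠ 0 := Nat.cast_ne_zero.2 (card_ne_zero_of_mem hs)
  -- Row orthogonality says `A * Aᴴ = #S • 1`; as `A` is square, also `Aᴴ * A = #S • 1`.
  let A : Matrix Λ S K := Matrix.of fun l x ↦ χ l x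
  let B : Matrix S Λ K := Matrix.of fun x l ↦ (#S : K)⁻¹ * starRingEnd K (χ l x)
  have hAB : A * B = 1 := by
    ext l l'
    rw [Matrix.mul_apply, Matrix.one_apply]
    simp only [A, B, Matrix.of_apply, mul_left_comm _ (#S : K)⁻¹, ← mul_sum]
    rw [Finset.sum_coe_sort S (fun x ↦ χ l x * starRingEnd K (χ l' x))]
    split_ifs with h
    · subst h
      rw [sum_congr rfl (hunit _ l.2), sum_const, nsmul_one, inv_mul_cancel₀ hS]
    · rw [horth _ l.2 _ l'.2 (Subtype.coe_ne_coe.2 h), mul_zero]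
  have hBA := congrFun₂ ((Matrix.mul_eq_one_comm_of_equiv (equivOfCardEq hcard)).1 hAB)
    ⟨s, hs⟩ ⟨s', hs'⟩
  rw [Matrix.mul_apply, Matrix.one_apply] at hBA
  simp only [A, B, Matrix.of_apply, mul_assoc, ← mul_sum] at hBA
  rw [Finset.sum_coe_sort Λ (fun l ↦ starRingEnd K (χ l s) * χ l s')] at hBA
  simpa [hne, hS] using hBA

section

variable {p q : ℕ} [NeZero p] [NeZero q]

theorem chiZp2_eq_stdAddChar (a u : ZMod p × ZMod p) :
    chiZp2 p a u = ZMod.stdAddChar (u.1 * a.1 + u.2 * a.2) := by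
  rw [chiZp2, ZMod.stdAddChar_apply, ZMod.toCircle_apply, mul_div_assoc]

theorem chiG_eq_stdAddChar (l x : (ZMod p × ZMod p) × ZMod q) :
    chiG p q l x =
      ZMod.stdAddChar (x.1.1 * l.1.1 + x.1.2 * l.1.2) * ZMod.stdAddChar (x.2 * l.2) := by
  rw [chiG, chiZp2_eq_stdAddChar, ZMod.stdAddChar_apply (N := q), ZMod.toCircle_apply,
    mul_div_assoc]

variable (p q) in
noncomputable def chiGChar (l : (ZMod p × ZMod p) × ZMod q) :
    AddChar ((ZMod p × ZMod p) × ZMod q) ℂ where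
  toFun := chiG p q l
  map_zero_eq_one' := by simp [chiG_eq_stdAddChar]
  map_add_eq_mul' x y := by
    simp only [chiG_eq_stdAddChar, Prod.fst_add, Prod.snd_add, add_mul]
    rw [mul_mul_mul_comm, ← AddChar.map_add_eq_mul, ← AddChar.map_add_eq_mul, add_add_add_comm]

theorem starRingEnd_chiG_mul_chiG (l x y : (ZMod p × ZMod p) × ZMod q) :
    starRingEnd ℂ (chiG p q l x) * chiG p q l y = chiG p q l (y - x) :=
  calc starRingEnd ℂ (chiGChar p q l x) * chiGChar p q l y
      = chiGChar p q l (-x + y) := by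
        rw [← AddChar.map_neg_eq_conj, ← AddChar.map_add_eq_mul]
    _ = chiG p q l (y - x) := by rw [neg_add_eq_sub]; rfl

theorem chiG_of_fst_eq_zero (l : (ZMod p × ZMod p) × ZMod q) {x : (ZMod p × ZMod p) × ZMod q}
    (hx : x.1 = 0) : chiG p q l x = ZMod.stdAddChar (x.2 * l.2) := by
  simp [chiG_eq_stdAddChar, hx]

theorem IsSpectrum.sum_stdAddChar_eq_zero_of_fst_eq {S Λ : Finset ((ZMod p × ZMod p) × ZMod q)}
    (h : IsSpectrum p q S Λ) {s s' : (ZMod p × ZMod p) × ZMod q} (hs : s ∈ S) (hs' : s' ∈ S)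
    (hne : s ≠ s') (hfst : s.1 = s'.1) :
    ∑ l ∈ Λ, ZMod.stdAddChar ((s'.2 - s.2) * l.2) = 0 := by
  have hunit (l x : (ZMod p × ZMod p) × ZMod q) :
      chiG p q l x * starRingEnd ℂ (chiG p q l x) = 1 := by
    rw [mul_comm, starRingEnd_chiG_mul_chiG, sub_self]
    exact (chiGChar p q l).map_zero_eq_one
  have hcol := sum_starRingEnd_mul_eq_zero_of_sum_mul_starRingEnd_eq_zero (chiG p q) h.1
    (fun l _ x _ ↦ hunit l x) h.2 hs hs' hne
  have hfst' : (s' - s).1 = 0 := by simp [hfst]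
  simpa only [starRingEnd_chiG_mul_chiG, chiG_of_fst_eq_zero _ hfst', Prod.snd_sub] using hcol

theorem tiles_of_injOn_fst {S : Finset ((ZMod p × ZMod p) × ZMod q)}
    (hinj : Set.InjOn Prod.fst (S : Set ((ZMod p × ZMod p) × ZMod q))) (hS : p ^ 2 ≤ #S) :
    Tiles p q S := by
  classical
  have himage : #(S.image Prod.fst) = #S := card_image_of_injOn hinj
  have hcard : #S = p ^ 2 := by
    refine le_antisymm ?_ hS
    simpa [himage, ZMod.card, sq] using card_le_univ (S.image Prod.fst)
  have huniv : S.image Prod.fst = univ :=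
    eq_univ_of_card _ (by simp [himage, hcard, ZMod.card, sq])
  refine ⟨{0} ×ˢ univ, by simp [hcard, ZMod.card, sq], fun g ↦ ?_⟩
  obtain ⟨s, hs, hsg⟩ := mem_image.1 (huniv ▸ mem_univ g.1)
  exact ⟨s, hs, (0, g.2 - s.2), by simp, by ext <;> simp [hsg]⟩

end

theorem case_p2_spectral_tile_general (p q : ℕ) [Fact p.Prime] [Fact q.Prime] (hpq : p ≠ q)
    (S Λ : Finset ((ZMod p × ZMod p) × ZMod q))
    (hpair : IsSpectrum p q S Λ)
    (hgcd : Nat.gcd (Fintype.card ((ZMod p × ZMod p) × ZMod q)) S.card = p ^ 2) :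
    ((∀ s ∈ S, ∀ s' ∈ S, s ≠ s' → s.1 ≠ s'.1) → Tiles p q S) ∧
    ¬ ∃ s ∈ S, ∃ s' ∈ S, s ≠ s' ∧ s.1 = s'.1 := by
  have hp : p.Prime := Fact.out
  have hq : q.Prime := Fact.out
  have hG : Fintype.card ((ZMod p × ZMod p) × ZMod q) = p ^ 2 * q := by
    simp [ZMod.card, sq]
  have hpS : p ^ 2 ∣ #S := hgcd ▸ Nat.gcd_dvd_right _ _
  have hS0 : #S ≠ 0 := by
    intro h0
    rw [h0, Nat.gcd_zero_right, hG] at hgcd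
    exact hq.ne_one (Nat.eq_of_mul_eq_mul_left (pow_pos hp.pos 2) (hgcd.trans (mul_one _).symm))
  have hqS : ¬ q ∣ #S := fun h ↦
    hpq ((Nat.prime_dvd_prime_iff_eq hq hp).1 (hq.dvd_of_dvd_pow
      (hgcd ▸ Nat.dvd_gcd (hG ▸ dvd_mul_left q _) h))).symm
  refine ⟨fun hinj ↦ tiles_of_injOn_fst (fun s hs s' hs' ↦ not_imp_not.1 (hinj s hs s' hs'))
    (Nat.le_of_dvd (Nat.pos_of_ne_zero hS0) hpS), ?_⟩
  rintro ⟨s, hs, s', hs', hne, hfst⟩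
  exact hqS (hpair.1 ▸ AddChar.prime_dvd_card_of_sum_eq_zero hq ZMod.injective_stdAddChar Λ _
    (hpair.sum_stdAddChar_eq_zero_of_fst_eq hs hs' hne hfst))

theorem case_p2_spectral_tile (p q : ℕ) [Fact p.Prime] [Fact q.Prime] (hpq : p ≠ q)
    (S Λ : Finset ((ZMod p × ZMod p) × ZMod q))
    (hpair : IsSpectrum p q S Λ)
    (hdvd : p ^ 2 ∣ S.card)
    (hgcd : Nat.gcd (Fintype.card ((ZMod p × ZMod p) × ZMod q)) S.card = p ^ 2) :
    ((∀ s ∈ S, ∀ s' ∈ S, s ≠ s' → s.1 ≠ s'.1) → Tiles p q S) ∧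
    ¬ ∃ s ∈ S, ∃ s' ∈ S, s ≠ s' ∧ s.1 = s'.1 :=
  case_p2_spectral_tile_general p q hpq S Λ hpair hgcd
end
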